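/- For every finite abelian group G and every r ∈ ℕ, every r-coloring of G admits a monochromatic symmetric subset of size at least |G|/r², i.e., ms(G, r) ≥ 1/r². -/

import Mathlib

/-!
For a centre `x`, the points `a` with `χ (2 • x - a) = χ a` split by colour into monochromatic
sets symmetric about `x`, so it suffices to find `x` with many such points. Summing over `x`,
each pair `(a, b)` with `χ a = χ b` is counted once for every solution of `2 • x = a + b`, that
is `|G[2]|` times (`G[2]` the 2-torsion) if `a` and `b` lie in the same coset of `2G`, and never
otherwise. Cauchy–Schwarz over the `r · [G : 2G]` classes of the refined colouring
`a ↦ (χ a, a + 2G)` bounds the count from below by `|G[2]| · |G|² / (r · [G : 2G]) = |G|² / r`,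
since `|G[2]| = [G : 2G]`. Averaging over `x` and then over the colours gives a monochromatic
symmetric set with at least `|G| / r²` elements.
-/

open Finset

namespace AddMonoidHom

variable {G G' : Type*} [AddGroup G] [Fintype G] [AddGroup G'] [Fintype G'] [DecidableEq G']

theorem card_filter_apply_eq_card_ker_mul (f : G →+ G') (Q : G' → Prop) [DecidablePred Q]
    [DecidablePred (· ∈ f.range)] :
    #{x | Q (f x)} = Nat.card f.ker * #{y | y ∈ f.range ∧ Q y} := by
  rw [card_eq_sum_card_fiberwise (f := f) (t := {y | y ∈ f.range ∧ Q y})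
    (fun x hx => mem_filter.2 ⟨mem_univ _, ⟨x, rfl⟩, (mem_filter.1 hx).2⟩), mul_comm,
    ← smul_eq_mul, ← sum_const]
  refine sum_congr rfl fun y hy => ?_
  obtain ⟨hy, hQ⟩ := (mem_filter.1 hy).2
  rw [filter_filter, filter_congr fun x _ => and_iff_right_of_imp fun (hx : f x = y) => hx ▸ hQ,
    card_fiber_eq_of_mem_range f hy ⟨0, map_zero f⟩, Nat.card_eq_fintype_card,
    Fintype.card_subtype]
  simp only [mem_ker]

end AddMonoidHom

theorem Fintype.sq_card_le_card_mul_sum_card_fiber {α β : Type*} [Fintype α] [Fintype β]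
    [DecidableEq β] (f : α → β) :
    Fintype.card α ^ 2 ≤ Fintype.card β * ∑ a, #{b | f b = f a} := by
  have hsq : ∑ a, #{b | f b = f a} = ∑ y, #{b | f b = y} ^ 2 := by
    rw [← Finset.sum_fiberwise' univ f fun y => #{b | f b = y}]
    simp only [sum_const, smul_eq_mul, sq]
  rw [hsq, ← card_univ, card_eq_sum_card_fiberwise fun a _ => mem_univ (f a)]
  exact sq_sum_le_card_mul_sum_sq

section SymmetricPairs

variable {G κ : Type*} [AddCommGroup G] [Fintype G] [DecidableEq G] [DecidableEq κ]

theorem card_filter_two_nsmul_sub_eq_index_mul (χ : G → κ) (a : G) :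
    #{x | χ (2 • x - a) = χ a} = (nsmulAddMonoidHom 2 : G →+ G).range.index *
      #{b | χ b = χ a ∧ (b : G ⧸ (nsmulAddMonoidHom 2 : G →+ G).range) = a} := by
  set H := (nsmulAddMonoidHom 2 : G →+ G).range
  have hcoset (b : G) : b + a ∈ H ↔ (b : G ⧸ H) = a := by
    rw [QuotientAddGroup.eq_iff_sub_mem, ← H.add_mem_cancel_right (y := b - a) ⟨a, rfl⟩,
      nsmulAddMonoidHom_apply, two_nsmul, sub_add_add_cancel]
  calc #{x | χ (2 • x - a) = χ a}
      = Nat.card (nsmulAddMonoidHom 2 : G →+ G).ker * #{y | y ∈ H ∧ χ (y - a) = χ a} :=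
        AddMonoidHom.card_filter_apply_eq_card_ker_mul (nsmulAddMonoidHom 2 : G →+ G) fun y =>
          χ (y - a) = χ a
    _ = _ := by
      rw [AddSubgroup.index_range]
      congr 1
      refine card_nbij' (· - a) (· + a) ?_ ?_ (fun _ _ => sub_add_cancel _ _)
        (fun _ _ => add_sub_cancel_right _ _)
      · intro y hy
        simp only [mem_coe, mem_filter_univ] at hy ⊢
        exact ⟨hy.2, (hcoset _).1 (by rw [sub_add_cancel]; exact hy.1)⟩
      · intro b hb
        simp only [mem_coe, mem_filter_univ, add_sub_cancel_right] at hb ⊢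
        exact ⟨(hcoset b).2 hb.2, hb.1⟩

theorem sq_card_le_card_mul_sum_card_filter_two_nsmul_sub [Fintype κ] (χ : G → κ) :
    Fintype.card G ^ 2 ≤ Fintype.card κ * ∑ x, #{a | χ (2 • x - a) = χ a} := by
  set H := (nsmulAddMonoidHom 2 : G →+ G).range
  calc Fintype.card G ^ 2
      ≤ Fintype.card (κ × G ⧸ H) * ∑ a, #{b | (χ b, (b : G ⧸ H)) = (χ a, (a : G ⧸ H))} :=
        Fintype.sq_card_le_card_mul_sum_card_fiber _
    _ = Fintype.card κ * ∑ a, H.index * #{b | χ b = χ a ∧ (b : G ⧸ H) = a} := by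
        rw [Fintype.card_prod, ← mul_sum, mul_assoc, AddSubgroup.index, Nat.card_eq_fintype_card]
        simp only [Prod.mk.injEq]
    _ = Fintype.card κ * ∑ a, #{x | χ (2 • x - a) = χ a} := by
        simp only [card_filter_two_nsmul_sub_eq_index_mul, H]
    _ = Fintype.card κ * ∑ x, #{a | χ (2 • x - a) = χ a} := by
        congr 1
        exact (sum_card_bipartiteAbove_eq_sum_card_bipartiteBelow
          (fun x a => χ (2 • x - a) = χ a) (s := univ) (t := univ)).symm

end SymmetricPairs

theorem image_two_nsmul_sub_setOf_eq {G κ : Type*} [AddCommGroup G] (χ : G → κ) (x : G) (c : κ) :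
    (fun a => 2 • x - a) '' {a | χ (2 • x - a) = χ a ∧ χ a = c} =
      {a | χ (2 • x - a) = χ a ∧ χ a = c} := by
  rw [Function.Involutive.image_eq_preimage_symm (f := fun a => 2 • x - a) (sub_sub_cancel _)]
  ext a
  simp only [Set.mem_preimage, Set.mem_ofPred_eq, sub_sub_cancel]
  constructor <;> rintro ⟨h, rfl⟩ <;> exact ⟨h.symm, h⟩

/-- ms(G, r) ≥ 1/r² for every finite abelian group G: every r-coloring admits a
monochromatic symmetric subset of size at least |G|/r². -/
theorem stmt_13 (G : Type) [AddCommGroup G] [Fintype G] (r : ℕ) (χ : G → Fin r) :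
    ∃ A : Set G, (∃ c, ∀ a ∈ A, χ a = c) ∧
      (∃ x : G, A = (fun a => 2 • x - a) '' A) ∧
      (Fintype.card G : ℝ) / (r : ℝ) ^ 2 ≤ (A.ncard : ℝ) := by
  classical
  have hr : (0 : ℝ) < r := Nat.cast_pos.2 (Fin.pos_iff_nonempty.2 ⟨χ 0⟩)
  set n := Fintype.card G
  have hcount : (n : ℝ) ^ 2 ≤ r * ∑ x, (#{a | χ (2 • x - a) = χ a} : ℝ) := by
    have := sq_card_le_card_mul_sum_card_filter_two_nsmul_sub χ
    rw [Fintype.card_fin] at this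
    exact_mod_cast this
  obtain ⟨x, -, hx⟩ : ∃ x ∈ univ, (n : ℝ) / r ≤ #{a | χ (2 • x - a) = χ a} := by
    refine exists_le_of_sum_le univ_nonempty ?_
    rw [sum_const, card_univ, nsmul_eq_mul, ← mul_div_assoc, div_le_iff₀ hr, ← sq, mul_comm]
    exact hcount
  obtain ⟨c, -, hc⟩ := exists_le_card_fiber_of_nsmul_le_card_of_maps_to
    (s := {a | χ (2 • x - a) = χ a}) (fun a _ => mem_univ (χ a)) ⟨χ 0, mem_univ _⟩
    (b := (n : ℝ) / r ^ 2) (by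
      rw [card_univ, Fintype.card_fin, nsmul_eq_mul, sq, ← div_div, mul_div_cancel₀ _ hr.ne']
      exact hx)
  refine ⟨{a | χ (2 • x - a) = χ a ∧ χ a = c}, ⟨c, fun a ha => ha.2⟩,
    ⟨x, (image_two_nsmul_sub_setOf_eq χ x c).symm⟩, ?_⟩
  rwa [filter_filter, ← Set.ncard_coe_finset, coe_filter_univ] at hc
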